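/- arXiv:2509.22036 — 5 statements merged into one kernel-verified Lean document; each statement's English description precedes it below -/
import Mathlib

section
/- For all a > 0 and b ≥ 0, ∫_0^∞ t^{−1/2} e^{−a·t − b/t} dt = √(π/a) · e^{−2√(a·b)}, where the integral is the Lebesgue integral over (0,∞). -/
/-!
Substituting `t = u ^ 2` and completing the square,
`a u² + b / u² = (√a u - √b / u)² + 2 √(a b)`, reduces the integral to
`2 e^{-2√(ab)} ∫₀^∞ exp (-(c u - d / u)²) du` with `c = √a`, `d = √b`. This is evaluated by the
Cauchy–Schlömilch transformation: for an even integrable `f` and `c, d > 0`, the map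
`u ↦ c u - d / u` is a bijection `(0, ∞) → ℝ` with derivative `c + d / u²`, so
`∫₀^∞ (c + d / u²) f (c u - d / u) du = ∫ f`; and the involution `u ↦ d / (c u)` reverses the sign
of `c u - d / u`, so the two summands `c` and `d / u²` of the weight contribute equally.
-/

open MeasureTheory Set Real

theorem integral_Ioi_rpow_neg_half_mul (g : ℝ → ℝ) :
    ∫ t in Ioi (0 : ℝ), t ^ (-(1 / 2 : ℝ)) * g t = 2 * ∫ u in Ioi (0 : ℝ), g (u ^ 2) := by
  rw [← integral_comp_rpow_Ioi_of_pos two_pos, ← integral_const_mul]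
  refine setIntegral_congr_fun measurableSet_Ioi fun u (hu : 0 < u) => ?_
  have hinv : (u ^ (2 : ℝ)) ^ (-(1 / 2 : ℝ)) = u⁻¹ := by
    rw [← rpow_mul hu.le]; norm_num [rpow_neg_one]
  rw [smul_eq_mul, hinv, rpow_two]
  norm_num
  field_simp

section CauchySchlomilch

variable {E : Type*} [NormedAddCommGroup E] [NormedSpace ℝ E]

theorem integral_Ioi_div_sq_smul_comp_div (g : ℝ → E) {k : ℝ} (hk : 0 < k) :
    ∫ u in Ioi (0 : ℝ), (k / u ^ 2) • g (k / u) = ∫ u in Ioi (0 : ℝ), g u := by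
  have himage : (fun u : ℝ => k / u) '' Ioi 0 = Ioi 0 :=
    Subset.antisymm (image_subset_iff.2 fun u (hu : 0 < u) => div_pos hk hu)
      fun x (hx : 0 < x) => ⟨k / x, div_pos hk hx, div_div_cancel₀ hk.ne'⟩
  have hinj : InjOn (fun u : ℝ => k / u) (Ioi 0) := fun u _ v _ h => by
    simpa [div_eq_mul_inv, hk.ne'] using h
  have hderiv : ∀ u ∈ Ioi (0 : ℝ), HasDerivWithinAt (fun u => k / u) (-(k / u ^ 2)) (Ioi 0) u :=
    fun u hu => by
      simpa [div_eq_mul_inv] using ((hasDerivAt_inv (ne_of_gt hu)).const_mul k).hasDerivWithinAt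
  have hcov := integral_image_eq_integral_abs_deriv_smul measurableSet_Ioi hderiv hinj g
  rw [himage] at hcov
  rw [hcov]
  refine setIntegral_congr_fun measurableSet_Ioi fun u (hu : 0 < u) => ?_
  rw [abs_neg, abs_of_pos (by positivity)]

variable {c d : ℝ}

theorem hasDerivAt_mul_sub_div (c d : ℝ) {u : ℝ} (hu : u ≠ 0) :
    HasDerivAt (fun u => c * u - d / u) (c + d / u ^ 2) u := by
  simpa [div_eq_mul_inv] using
    ((hasDerivAt_id' u).const_mul c).fun_sub ((hasDerivAt_inv hu).const_mul d)

theorem strictMonoOn_mul_sub_div (hc : 0 < c) (hd : 0 ≤ d) :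
    StrictMonoOn (fun u => c * u - d / u) (Ioi 0) := fun u (hu : 0 < u) v _ huv => by
  have := div_le_div_of_nonneg_left hd hu huv.le
  have := mul_lt_mul_of_pos_left huv hc
  dsimp only
  linarith

theorem image_mul_sub_div_Ioi (hc : 0 < c) (hd : 0 < d) :
    (fun u => c * u - d / u) '' Ioi 0 = univ := by
  refine eq_univ_of_forall fun y => ?_
  set s := √(y ^ 2 + 4 * c * d)
  have hs : s ^ 2 = y ^ 2 + 4 * c * d := sq_sqrt (by positivity)
  have hys : 0 < y + s := by nlinarith [sqrt_nonneg (y ^ 2 + 4 * c * d), mul_pos hc hd]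
  refine ⟨(y + s) / (2 * c), div_pos hys (by positivity), ?_⟩
  field_simp
  linear_combination hs

theorem integral_Ioi_comp_mul_sub_div {f : ℝ → E} (hf : Function.Even f) (hfi : Integrable f)
    (hc : 0 < c) (hd : 0 < d) :
    ∫ u in Ioi (0 : ℝ), f (c * u - d / u) = (2 * c)⁻¹ • ∫ x, f x := by
  set φ := fun u : ℝ => c * u - d / u
  have hderiv : ∀ u ∈ Ioi (0 : ℝ), HasDerivWithinAt φ (c + d / u ^ 2) (Ioi 0) u :=
    fun u hu => (hasDerivAt_mul_sub_div c d (ne_of_gt hu)).hasDerivWithinAt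
  have hinj := (strictMonoOn_mul_sub_div hc hd.le).injOn
  have habs : ∀ u ∈ Ioi (0 : ℝ), |c + d / u ^ 2| • f (φ u) = (c + d / u ^ 2) • f (φ u) :=
    fun u (hu : 0 < u) => by rw [abs_of_pos (by positivity)]
  have hsubst : ∫ x, f x = ∫ u in Ioi (0 : ℝ), (c + d / u ^ 2) • f (φ u) := by
    have hcov := integral_image_eq_integral_abs_deriv_smul measurableSet_Ioi hderiv hinj f
    rw [image_mul_sub_div_Ioi hc hd, Measure.restrict_univ] at hcov
    rw [hcov, setIntegral_congr_fun measurableSet_Ioi habs]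
  have hint : IntegrableOn (fun u => (c + d / u ^ 2) • f (φ u)) (Ioi 0) := by
    rw [← integrableOn_congr_fun habs measurableSet_Ioi,
      ← integrableOn_image_iff_integrableOn_abs_deriv_smul measurableSet_Ioi hderiv hinj,
      image_mul_sub_div_Ioi hc hd, integrableOn_univ]
    exact hfi
  have hintJ : IntegrableOn (fun u => f (φ u)) (Ioi 0) := by
    have hbdd : ∀ᵐ u ∂volume.restrict (Ioi 0), ‖(c + d / u ^ 2)⁻¹‖ ≤ c⁻¹ :=
      ae_restrict_of_forall_mem measurableSet_Ioi fun u (hu : 0 < u) => by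
        rw [norm_inv, Real.norm_of_nonneg (by positivity)]
        exact inv_anti₀ hc (le_add_of_nonneg_right (by positivity))
    refine (integrableOn_congr_fun (fun u (hu : 0 < u) => ?_) measurableSet_Ioi).1
      (hint.bdd_smul c⁻¹ (Measurable.aestronglyMeasurable (by fun_prop)) hbdd)
    exact inv_smul_smul₀ (by positivity) _
  have hintcJ : IntegrableOn (fun u => c • f (φ u)) (Ioi 0) := hintJ.smul c
  have hintD : IntegrableOn (fun u => (d / u ^ 2) • f (φ u)) (Ioi 0) :=
    (integrableOn_congr_fun (fun u _ => by simp [add_smul]) measurableSet_Ioi).1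
      (hint.sub hintcJ)
  have hswap : ∫ u in Ioi (0 : ℝ), (d / u ^ 2) • f (φ u) = c • ∫ u in Ioi (0 : ℝ), f (φ u) := by
    rw [← integral_Ioi_div_sq_smul_comp_div (fun u => f (φ u)) (div_pos hd hc), ← integral_smul]
    refine setIntegral_congr_fun measurableSet_Ioi fun u (hu : 0 < u) => ?_
    have hflip : φ (d / c / u) = -φ u := by simp only [φ]; field_simp; ring
    rw [hflip, hf, smul_smul]
    congr 1
    field_simp
  have hsplit : ∫ x, f x = (2 * c) • ∫ u in Ioi (0 : ℝ), f (φ u) := calc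
    ∫ x, f x = ∫ u in Ioi (0 : ℝ), (c + d / u ^ 2) • f (φ u) := hsubst
    _ = (∫ u in Ioi (0 : ℝ), c • f (φ u)) + ∫ u in Ioi (0 : ℝ), (d / u ^ 2) • f (φ u) := by
      simp_rw [add_smul]
      exact integral_add hintcJ hintD
    _ = (2 * c) • ∫ u in Ioi (0 : ℝ), f (φ u) := by rw [integral_smul, hswap, two_mul, add_smul]
  rw [hsplit, inv_smul_smul₀ (by positivity)]

end CauchySchlomilch

theorem integral_Ioi_exp_neg_mul_sq_sub_div_sq {a b : ℝ} (ha : 0 < a) (hb : 0 ≤ b) :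
    ∫ u in Ioi (0 : ℝ), exp (-(a * u ^ 2) - b / u ^ 2) = √(π / a) / 2 * exp (-2 * √(a * b)) := by
  rcases hb.eq_or_lt with rfl | hb_pos
  · simpa using integral_gaussian_Ioi a
  have hsq : ∀ u ∈ Ioi (0 : ℝ), exp (-(a * u ^ 2) - b / u ^ 2)
      = exp (-2 * √(a * b)) * exp (-(√a * u - √b / u) ^ 2) := fun u (hu : 0 < u) => by
    rw [← exp_add, sqrt_mul ha.le]
    congr 1
    field_simp
    linear_combination (u ^ 4) * sq_sqrt ha.le + sq_sqrt hb
  have hgauss : ∫ x, exp (-x ^ 2) = √π := by simpa using integral_gaussian 1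
  rw [setIntegral_congr_fun measurableSet_Ioi hsq, integral_const_mul,
    integral_Ioi_comp_mul_sub_div (f := fun x => exp (-x ^ 2)) (fun x => by simp)
      (by simpa using integrable_exp_neg_mul_sq one_pos) (sqrt_pos.2 ha) (sqrt_pos.2 hb_pos),
    hgauss, smul_eq_mul, sqrt_div' π ha.le]
  field_simp

/-- For all `a > 0` and `b ≥ 0`,
`∫_0^∞ t^{-1/2} e^{-a t - b/t} dt = √(π/a) · e^{-2√(ab)}`. -/
theorem integral_rpow_neg_half_exp (a b : ℝ) (ha : 0 < a) (hb : 0 ≤ b) :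
    ∫ t in Set.Ioi (0 : ℝ), t ^ (-(1/2 : ℝ)) * Real.exp (-(a * t) - b / t)
      = Real.sqrt (Real.pi / a) * Real.exp (-2 * Real.sqrt (a * b)) := by
  rw [integral_Ioi_rpow_neg_half_mul fun t => exp (-(a * t) - b / t),
    integral_Ioi_exp_neg_mul_sq_sub_div_sq ha hb]
  ring
end

section
/- Let μ be a finite Borel measure on ℝ and λ > 0, and set F(x) = ∫_ℝ G_λ(y − x) μ(dy). Then for every x ∈ ℝ, F has a right derivative at x and it equals ∫_ℝ g_λ(x − y) μ(dy) − μ({x}); that is, lim_{h→0+} (F(x+h) − F(x))/h = ∫_ℝ g_λ(x − y) μ(dy) − μ({x}). -/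
/-!
`G_λ(u) = e^{-√(2λ)|u|} / √(2λ)` is even and 1-Lipschitz, so `F(x) = ∫ G_λ(x - y) μ(dy)` and the
difference quotients of `x ↦ G_λ(x - y)` are bounded by 1: dominated convergence moves the right
derivative under the integral. Pointwise, the right derivative of `G_λ` at `u` is `g_λ(u)` for
`u ≠ 0`, but `-1 = g_λ(0) - 1` at the kink `u = 0`; integrating this defect `-1_{y = x}` against
`μ` produces the atom `-μ{x}`.
-/

open MeasureTheory Filter Set

/-- `G_λ(x) = (2λ)^{-1/2} · exp(-√(2λ)·|x|)`. -/
noncomputable def Gl (l : ℝ) (x : ℝ) : ℝ :=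
  (2 * l) ^ (-(1/2 : ℝ)) * Real.exp (-Real.sqrt (2 * l) * |x|)

/-- `g_λ(x) = -sgn(x) · exp(-√(2λ)·|x|)`. -/
noncomputable def gl (l : ℝ) (x : ℝ) : ℝ :=
  -Real.sign x * Real.exp (-Real.sqrt (2 * l) * |x|)

open Topology

theorem Real.hasDerivAt_abs_sign {u : ℝ} (hu : u ≠ 0) : HasDerivAt (|·|) (Real.sign u) u := by
  rcases hu.lt_or_gt with hu | hu
  · simpa [Real.sign_of_neg hu] using hasDerivAt_abs_neg hu
  · simpa [Real.sign_of_pos hu] using hasDerivAt_abs_pos hu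

theorem Real.measurable_sign : Measurable Real.sign :=
  Measurable.ite measurableSet_Iio measurable_const
    (Measurable.ite measurableSet_Ioi measurable_const measurable_const)

theorem hasDerivAt_exp_neg_mul_div {B : ℝ} (hB : B ≠ 0) (t : ℝ) :
    HasDerivAt (fun s => Real.exp (-B * s) / B) (-Real.exp (-B * t)) t := by
  have h := (((hasDerivAt_id' t).const_mul (-B)).exp).div_const B
  exact h.congr_deriv (by field_simp)

theorem Real.exp_neg_mul_le_one {B t : ℝ} (hB : 0 ≤ B) (ht : 0 ≤ t) : Real.exp (-B * t) ≤ 1 :=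
  Real.exp_le_one_iff.mpr (mul_nonpos_of_nonpos_of_nonneg (neg_nonpos.mpr hB) ht)

theorem tendsto_slope_integral_comp_sub {φ φ' : ℝ → ℝ} {K : NNReal} (hφ : LipschitzWith K φ)
    (hφ' : ∀ u, Tendsto (fun t => t⁻¹ * (φ (u + t) - φ u)) (𝓝[>] 0) (𝓝 (φ' u)))
    (μ : Measure ℝ) [IsFiniteMeasure μ] (hint : ∀ z, Integrable (fun y => φ (z - y)) μ) (x : ℝ) :
    Tendsto (fun t => t⁻¹ * ((∫ y, φ (x + t - y) ∂μ) - ∫ y, φ (x - y) ∂μ)) (𝓝[>] 0)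
      (𝓝 (∫ y, φ' (x - y) ∂μ)) := by
  have hquot : ∀ t, t⁻¹ * ((∫ y, φ (x + t - y) ∂μ) - ∫ y, φ (x - y) ∂μ)
      = ∫ y, t⁻¹ * (φ (x - y + t) - φ (x - y)) ∂μ := by
    intro t
    simp only [sub_add_eq_add_sub]
    rw [integral_const_mul, integral_sub (hint _) (hint _)]
  simp only [hquot]
  refine tendsto_integral_filter_of_dominated_convergence (fun _ => (K : ℝ)) ?_ ?_
    (integrable_const _) (ae_of_all _ fun y => hφ' (x - y))
  · exact Eventually.of_forall fun t =>
      (((hint (x + t)).sub (hint x)).const_mul t⁻¹).aestronglyMeasurable.congr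
        (ae_of_all _ fun y => by simp only [sub_add_eq_add_sub, Pi.sub_apply])
  · filter_upwards [self_mem_nhdsWithin] with t (ht : 0 < t)
    refine ae_of_all _ fun y => ?_
    have hlip := hφ.dist_le_mul (x - y + t) (x - y)
    rw [dist_eq_norm, dist_eq_norm, add_sub_cancel_left, Real.norm_of_nonneg ht.le] at hlip
    rw [norm_mul, norm_inv, Real.norm_of_nonneg ht.le, inv_mul_le_iff₀ ht, mul_comm]
    exact hlip

namespace Gl

variable {l : ℝ}

theorem exp_neg_mul_div_comp_abs (hl : 0 ≤ l) :
    (fun s => Real.exp (-Real.sqrt (2 * l) * s) / Real.sqrt (2 * l)) ∘ (|·|) = Gl l := by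
  funext u
  rw [Function.comp_apply, Gl, Real.sqrt_eq_rpow, Real.rpow_neg (by positivity)]
  ring

theorem sub_comm (l a b : ℝ) : Gl l (a - b) = Gl l (b - a) := by
  rw [Gl, Gl, abs_sub_comm]

theorem abs_le_abs_zero (l u : ℝ) : |Gl l u| ≤ |Gl l 0| := by
  simp only [Gl, abs_mul, Real.abs_exp, abs_zero, mul_zero, Real.exp_zero, mul_one]
  exact mul_le_of_le_one_right (abs_nonneg _)
    (Real.exp_neg_mul_le_one (Real.sqrt_nonneg _) (abs_nonneg u))

theorem lipschitzWith (hl : 0 < l) : LipschitzWith 1 (Gl l) := by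
  have hB : 0 < Real.sqrt (2 * l) := by positivity
  have hE : LipschitzOnWith 1 (fun s => Real.exp (-Real.sqrt (2 * l) * s) / Real.sqrt (2 * l))
      (Ici 0) := by
    refine (convex_Ici 0).lipschitzOnWith_of_nnnorm_hasDerivWithin_le
      (fun t _ => (hasDerivAt_exp_neg_mul_div hB.ne' t).hasDerivWithinAt) fun t (ht : 0 ≤ t) => ?_
    rw [← NNReal.coe_le_coe, coe_nnnorm, norm_neg, Real.norm_of_nonneg (Real.exp_nonneg _),
      NNReal.coe_one]
    exact Real.exp_neg_mul_le_one hB.le ht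
  have hcomp := hE.comp ((lipschitzWith_one_norm (E := ℝ)).lipschitzOnWith (s := univ))
    fun u _ => norm_nonneg u
  rw [lipschitzOnWith_univ, mul_one] at hcomp
  rwa [← exp_neg_mul_div_comp_abs hl.le]

theorem hasDerivAt (hl : 0 < l) {u : ℝ} (hu : u ≠ 0) : HasDerivAt (Gl l) (gl l u) u := by
  have hB : Real.sqrt (2 * l) ≠ 0 := by positivity
  have h := (hasDerivAt_exp_neg_mul_div hB |u|).comp u (Real.hasDerivAt_abs_sign hu)
  rw [exp_neg_mul_div_comp_abs hl.le] at h
  exact h.congr_deriv (by simp only [gl]; ring)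

theorem tendsto_slope_zero_right (hl : 0 < l) (u : ℝ) :
    Tendsto (fun t => t⁻¹ * (Gl l (u + t) - Gl l u)) (𝓝[>] 0)
      (𝓝 (gl l u - ({0} : Set ℝ).indicator 1 u)) := by
  rcases eq_or_ne u 0 with rfl | hu
  · have hB : Real.sqrt (2 * l) ≠ 0 := by positivity
    have hval : gl l 0 - ({0} : Set ℝ).indicator 1 0 = -Real.exp (-Real.sqrt (2 * l) * 0) := by
      simp [gl]
    rw [hval, ← exp_neg_mul_div_comp_abs hl.le]
    refine (hasDerivAt_exp_neg_mul_div hB 0).tendsto_slope_zero_right.congr'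
      (eventually_nhdsWithin_of_forall fun t (ht : 0 < t) => ?_)
    simp [abs_of_pos ht]
  · simpa [hu] using (hasDerivAt hl hu).tendsto_slope_zero_right

end Gl

namespace gl

theorem measurable (l : ℝ) : Measurable (gl l) :=
  Real.measurable_sign.neg.mul (by fun_prop)

theorem abs_le_one (l u : ℝ) : |gl l u| ≤ 1 := by
  have hsign : |Real.sign u| ≤ 1 := by
    rcases Real.sign_apply_eq u with h | h | h <;> simp [h]
  rw [gl, abs_mul, abs_neg, Real.abs_exp]
  exact mul_le_one₀ hsign (Real.exp_nonneg _)
    (Real.exp_neg_mul_le_one (Real.sqrt_nonneg _) (abs_nonneg u))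

end gl

/-- Let `μ` be a finite Borel measure on `ℝ` and `λ > 0`, and set
`F(x) = ∫_ℝ G_λ(y − x) μ(dy)`. Then for every `x`, `F` has a right derivative at `x` equal to
`∫_ℝ g_λ(x − y) μ(dy) − μ({x})`. -/
theorem integral_Gl_right_deriv (μ : Measure ℝ) [IsFiniteMeasure μ] (l : ℝ) (hl : 0 < l)
    (x : ℝ) :
    Tendsto (fun h : ℝ => ((∫ y, Gl l (y - (x + h)) ∂μ) - ∫ y, Gl l (y - x) ∂μ) / h)
      (nhdsWithin 0 (Set.Ioi 0))
      (nhds ((∫ y, gl l (x - y) ∂μ) - (μ {x}).toReal)) := by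
  have hsub : ∀ z : ℝ, Measurable fun y : ℝ => z - y := fun z => measurable_const.sub measurable_id
  have hGl : ∀ z, Integrable (fun y => Gl l (z - y)) μ := fun z =>
    .of_bound ((Gl.lipschitzWith hl).continuous.measurable.comp (hsub _)).aestronglyMeasurable _
      (ae_of_all _ fun y => Gl.abs_le_abs_zero l (z - y))
  have hgl : Integrable (fun y => gl l (x - y)) μ :=
    .of_bound ((gl.measurable l).comp (hsub _)).aestronglyMeasurable 1
      (ae_of_all _ fun y => gl.abs_le_one l (x - y))
  have hatom : ∀ y, ({0} : Set ℝ).indicator 1 (x - y) = ({x} : Set ℝ).indicator (1 : ℝ → ℝ) y :=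
    fun y => by simp [Set.indicator_apply, sub_eq_zero, eq_comm]
  have hlim := tendsto_slope_integral_comp_sub (Gl.lipschitzWith hl)
    (Gl.tendsto_slope_zero_right hl) μ hGl x
  simp only [hatom] at hlim
  have hind : Integrable (({x} : Set ℝ).indicator (1 : ℝ → ℝ)) μ :=
    (integrable_const 1).indicator (measurableSet_singleton x)
  rw [integral_sub hgl hind, integral_indicator_one (measurableSet_singleton x)] at hlim
  refine hlim.congr fun h => ?_
  simp only [div_eq_inv_mul, Gl.sub_comm l _ x, Gl.sub_comm l _ (x + h)]
end

section
/- Let μ be a finite Borel measure on ℝ with no atoms (μ({x}) = 0 for every x ∈ ℝ) and let λ > 0. Then the function F(x) = ∫_ℝ G_λ(y − x) μ(dy) is differentiable at every x ∈ ℝ with F'(x) = ∫_ℝ g_λ(x − y) μ(dy). -/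
open MeasureTheory Filter Set

/-!
Differentiate under the integral sign. `G_λ` is bounded and `1`-Lipschitz, and it is
differentiable with derivative `g_λ` away from the origin, so `y ↦ G_λ(y - x)` is differentiable
in `x` except at `y = x`, a `μ`-null set because `μ` has no atom at `x`. Dominated
differentiation for Lipschitz families then gives the result, with `-g_λ(y - x) = g_λ(x - y)`.
-/

theorem hasDerivAt_integral_comp_sub_of_lipschitzWith {E : Type*} [NormedAddCommGroup E]
    [NormedSpace ℝ E] [CompleteSpace E] {μ : Measure ℝ} [IsFiniteMeasure μ] {x : ℝ}
    (hx : μ {x} = 0) {K K' : ℝ → E} {C : NNReal} (hK : LipschitzWith C K)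
    (hK_int : Integrable (fun y => K (y - x)) μ) (hK' : ∀ z ≠ 0, HasDerivAt K (K' z) z) :
    HasDerivAt (fun x => ∫ y, K (y - x) ∂μ) (∫ y, -K' (y - x) ∂μ) x := by
  have h_ne : ∀ᵐ y ∂μ, y ≠ x := by simpa [ae_iff] using hx
  have h_diff : ∀ᵐ y ∂μ, HasDerivAt (fun x => K (y - x)) (-K' (y - x)) x := by
    filter_upwards [h_ne] with y hy
    simpa using (hK' (y - x) (sub_ne_zero.mpr hy)).comp_const_sub y x
  -- `K'` agrees with the measurable `deriv K` off the origin.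
  have hK'_meas : AEStronglyMeasurable (fun y => -K' (y - x)) μ := by
    refine ((stronglyMeasurable_deriv K).comp_measurable (measurable_id.sub_const x)).neg
      |>.aestronglyMeasurable.congr ?_
    filter_upwards [h_ne] with y hy
    simp [(hK' (y - x) (sub_ne_zero.mpr hy)).deriv]
  refine (hasDerivAt_integral_of_dominated_loc_of_lip (F := fun x y => K (y - x))
    (bound := fun _ => (C : ℝ)) univ_mem (Eventually.of_forall fun x' =>
      (hK.continuous.comp (continuous_sub_right x')).aestronglyMeasurable)
    hK_int hK'_meas ?_ (integrable_const _) h_diff).2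
  refine Eventually.of_forall fun y => ?_
  have : LipschitzWith C (fun x => K (y - x)) :=
    mul_one C ▸ hK.comp (IsometryEquiv.subLeft y).isometry.lipschitz
  simpa using this

lemma continuous_Gl (l : ℝ) : Continuous (Gl l) := by
  unfold Gl; fun_prop

lemma abs_Gl_le (l z : ℝ) : |Gl l z| ≤ |(2 * l) ^ (-(1/2 : ℝ))| := by
  rw [Gl, abs_mul, Real.abs_exp]
  refine mul_le_of_le_one_right (abs_nonneg _) (Real.exp_le_one_iff.mpr ?_)
  exact mul_nonpos_of_nonpos_of_nonneg (neg_nonpos.mpr (Real.sqrt_nonneg _)) (abs_nonneg z)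

lemma integrable_Gl_comp_sub (μ : Measure ℝ) [IsFiniteMeasure μ] (l x : ℝ) :
    Integrable (fun y => Gl l (y - x)) μ :=
  .of_bound ((continuous_Gl l).comp (continuous_sub_right x)).aestronglyMeasurable _
    (Eventually.of_forall fun y => abs_Gl_le l (y - x))

lemma Gl_eq {l : ℝ} (hl : 0 ≤ l) :
    Gl l = fun z => (Real.sqrt (2 * l))⁻¹ * Real.exp (-Real.sqrt (2 * l) * |z|) := by
  ext z
  rw [Gl, Real.rpow_neg (by positivity), Real.sqrt_eq_rpow]

lemma gl_neg (l z : ℝ) : gl l (-z) = -gl l z := by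
  simp only [gl, Real.sign_neg, abs_neg, neg_neg, neg_mul]

lemma Real.sign_eq_coe_sign (r : ℝ) : Real.sign r = (SignType.sign r : ℝ) := by
  rcases lt_trichotomy r 0 with h | rfl | h
  · simp [Real.sign_of_neg h, _root_.sign_neg h]
  · simp [Real.sign_zero]
  · simp [Real.sign_of_pos h, sign_pos h]

lemma hasDerivAt_Gl {l z : ℝ} (hl : 0 < l) (hz : z ≠ 0) : HasDerivAt (Gl l) (gl l z) z := by
  have hc : Real.sqrt (2 * l) ≠ 0 := (Real.sqrt_pos.mpr (by positivity)).ne'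
  rw [Gl_eq hl.le]
  refine (((hasDerivAt_abs hz).const_mul (-Real.sqrt (2 * l))).exp.const_mul
    (Real.sqrt (2 * l))⁻¹).congr_deriv ?_
  rw [gl, Real.sign_eq_coe_sign]
  field_simp

lemma lipschitzWith_Gl {l : ℝ} (hl : 0 ≤ l) : LipschitzWith 1 (Gl l) := by
  set c := Real.sqrt (2 * l)
  have hc : 0 ≤ c := Real.sqrt_nonneg _
  have hf : LipschitzOnWith 1 (fun t => c⁻¹ * Real.exp (-c * t)) (Ici 0) := by
    refine (convex_Ici 0).lipschitzOnWith_of_nnnorm_hasDerivWithin_le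
      (fun t _ => (((hasDerivAt_id t).const_mul (-c)).exp.const_mul c⁻¹).hasDerivWithinAt) ?_
    intro t ht
    have he : Real.exp (-c * t) ≤ 1 := Real.exp_le_one_iff.mpr (by nlinarith [mem_Ici.mp ht])
    rw [← NNReal.coe_le_coe, coe_nnnorm, Real.norm_eq_abs]
    calc |c⁻¹ * (Real.exp (-c * t) * (-c * 1))| = Real.exp (-c * t) * (c⁻¹ * c) := by
          simp only [mul_one, mul_neg, abs_neg, abs_mul, abs_inv, abs_of_nonneg hc, Real.abs_exp]
          ring
      _ ≤ 1 * 1 := mul_le_mul he (inv_mul_le_one_of_le₀ le_rfl hc) (by positivity) zero_le_one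
      _ = 1 := one_mul 1
  rw [Gl_eq hl, ← lipschitzOnWith_univ]
  exact mul_one (1 : NNReal) ▸
    hf.comp (lipschitzWith_one_norm (E := ℝ)).lipschitzOnWith (fun z _ => abs_nonneg z)

/-- Let `μ` be a finite atomless Borel measure on `ℝ` and `λ > 0`. Then
`F(x) = ∫_ℝ G_λ(y − x) μ(dy)` is differentiable at every `x` with
`F'(x) = ∫_ℝ g_λ(x − y) μ(dy)`. -/
theorem integral_Gl_hasDerivAt (μ : Measure ℝ) [IsFiniteMeasure μ]
    (hatomless : ∀ x : ℝ, μ {x} = 0) (l : ℝ) (hl : 0 < l) (x : ℝ) :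
    HasDerivAt (fun x : ℝ => ∫ y, Gl l (y - x) ∂μ) (∫ y, gl l (x - y) ∂μ) x := by
  have h := hasDerivAt_integral_comp_sub_of_lipschitzWith (hatomless x) (lipschitzWith_Gl hl.le)
    (integrable_Gl_comp_sub μ l x) fun z hz => hasDerivAt_Gl hl hz
  simpa only [← gl_neg, neg_sub] using h
end

section
/- Let (Ω, 𝓕, P) be a probability space and let (Γ_x)_{x∈ℝ} be a family of real random variables such that: (a) for P-almost every ω, the map x ↦ Γ_x(ω) is continuous on ℝ; (b) E|Γ_x| < ∞ for every x ∈ ℝ; and (c) lim_{h→0} (1/|h|)·E|Γ_{x+h} − Γ_x| = 0 for every x ∈ ℝ. Then with probability one, Γ_x = Γ_0 for all x ∈ ℝ simultaneously. -/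
open MeasureTheory Filter Set

/-- Let `(Ω, 𝓕, P)` be a probability space and `(Γ_x)_{x∈ℝ}` a family of real
random variables such that: (a) for `P`-a.e. `ω`, `x ↦ Γ_x(ω)` is continuous on `ℝ`;
(b) `E|Γ_x| < ∞` for every `x`; (c) `lim_{h→0} (1/|h|)·E|Γ_{x+h} − Γ_x| = 0` for every `x`.
Then with probability one, `Γ_x = Γ_0` for all `x ∈ ℝ` simultaneously. -/
theorem constant_process_of_small_increments {Ω : Type*} [MeasurableSpace Ω]
    (P : Measure Ω) [IsProbabilityMeasure P] (Γ : ℝ → Ω → ℝ)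
    (hcont : ∀ᵐ ω ∂P, Continuous fun x : ℝ => Γ x ω)
    (hint : ∀ x : ℝ, Integrable (Γ x) P)
    (hlim : ∀ x : ℝ,
      Tendsto (fun h : ℝ => (1 / |h|) * ∫ ω, |Γ (x + h) ω - Γ x ω| ∂P)
        (nhdsWithin 0 {(0 : ℝ)}ᶜ) (nhds 0)) :
    ∀ᵐ ω ∂P, ∀ x : ℝ, Γ x ω = Γ 0 ω := by
  have hIabs : ∀ x y : ℝ, Integrable (fun ω => |Γ x ω - Γ y ω|) P :=
    fun x y => ((hint x).sub (hint y)).abs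
  set f : ℝ → ℝ := fun x => ∫ ω, |Γ x ω - Γ 0 ω| ∂P with hf
  -- key bound
  have hbound : ∀ x y : ℝ, |f y - f x| ≤ ∫ ω, |Γ y ω - Γ x ω| ∂P := by
    intro x y
    have h1 : f y - f x = ∫ ω, (|Γ y ω - Γ 0 ω| - |Γ x ω - Γ 0 ω|) ∂P :=
      (integral_sub (hIabs y 0) (hIabs x 0)).symm
    rw [h1]
    calc |∫ ω, (|Γ y ω - Γ 0 ω| - |Γ x ω - Γ 0 ω|) ∂P|
        ≤ ∫ ω, |(|Γ y ω - Γ 0 ω| - |Γ x ω - Γ 0 ω|)| ∂P :=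
          by simpa [Real.norm_eq_abs] using
            norm_integral_le_integral_norm (fun ω => |Γ y ω - Γ 0 ω| - |Γ x ω - Γ 0 ω|) (μ := P)
      _ ≤ ∫ ω, |Γ y ω - Γ x ω| ∂P := by
          refine integral_mono (((hIabs y 0).sub (hIabs x 0)).abs) (hIabs y x) fun ω => ?_
          have := abs_abs_sub_abs_le_abs_sub (Γ y ω - Γ 0 ω) (Γ x ω - Γ 0 ω)
          simpa using this
  have hderiv : ∀ x : ℝ, HasDerivAt f 0 x := by
    intro x
    rw [hasDerivAt_iff_isLittleO]
    simp only [smul_zero, sub_zero]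
    rw [Asymptotics.isLittleO_iff]
    intro c hc
    have h1 : ∀ᶠ h in nhdsWithin 0 {(0 : ℝ)}ᶜ,
        (1 / |h|) * ∫ ω, |Γ (x + h) ω - Γ x ω| ∂P ≤ c :=
      (hlim x).eventually (eventually_le_nhds hc)
    have hmap : Tendsto (fun x' : ℝ => x' - x) (nhdsWithin x {x}ᶜ)
        (nhdsWithin 0 {(0 : ℝ)}ᶜ) := by
      apply tendsto_nhdsWithin_of_tendsto_nhds_of_eventually_within
      · have h : Tendsto (fun x' : ℝ => x' - x) (nhds x) (nhds (x - x)) :=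
          (continuous_id.sub continuous_const).tendsto x
        rw [sub_self] at h
        exact h.mono_left nhdsWithin_le_nhds
      · exact eventually_mem_nhdsWithin.mono fun x' hx' =>
          sub_ne_zero.2 hx'
    have h2 := hmap.eventually h1
    have h3 : ∀ᶠ x' in nhdsWithin x {x}ᶜ, ‖f x' - f x‖ ≤ c * ‖x' - x‖ := by
      filter_upwards [h2, eventually_mem_nhdsWithin] with x' hx' hne
      have hxx : x + (x' - x) = x' := by ring
      rw [hxx] at hx'
      have habs : (0 : ℝ) < |x' - x| := abs_pos.2 (sub_ne_zero.2 hne)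
      have hI : ∫ ω, |Γ x' ω - Γ x ω| ∂P ≤ c * |x' - x| := by
        have := mul_le_mul_of_nonneg_left hx' (le_of_lt habs)
        rw [show |x' - x| * ((1 / |x' - x|) * ∫ ω, |Γ x' ω - Γ x ω| ∂P)
            = ∫ ω, |Γ x' ω - Γ x ω| ∂P by field_simp] at this
        linarith [this]
      calc ‖f x' - f x‖ = |f x' - f x| := rfl
        _ ≤ ∫ ω, |Γ x' ω - Γ x ω| ∂P := hbound x x'
        _ ≤ c * |x' - x| := hI
        _ = c * ‖x' - x‖ := rfl
    have hsup : nhds x = nhdsWithin x {x}ᶜ ⊔ pure x :=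
      (nhdsNE_sup_pure x).symm
    rw [hsup, eventually_sup]
    refine ⟨h3, ?_⟩
    simp [Real.norm_eq_abs]
  have hf0 : f 0 = 0 := by simp [hf]
  have hconst : ∀ x : ℝ, f x = 0 := by
    intro x
    have := is_const_of_deriv_eq_zero (f := f)
      (fun y => (hderiv y).differentiableAt) (fun y => (hderiv y).deriv) x 0
    rw [this, hf0]
  have hzero : ∀ x : ℝ, ∀ᵐ ω ∂P, Γ x ω = Γ 0 ω := by
    intro x
    have h0 : ∫ ω, |Γ x ω - Γ 0 ω| ∂P = 0 := hconst x
    have := (integral_eq_zero_iff_of_nonneg (fun ω => abs_nonneg _) (hIabs x 0)).mp h0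
    filter_upwards [this] with ω hω
    have : |Γ x ω - Γ 0 ω| = 0 := hω
    have := abs_eq_zero.mp this
    linarith [sub_eq_zero.mp this]
  have hrat : ∀ᵐ ω ∂P, ∀ q : ℚ, Γ (q : ℝ) ω = Γ 0 ω :=
    ae_all_iff.2 fun q => hzero q
  filter_upwards [hrat, hcont] with ω hq hcω
  intro x
  have hdense : Dense (Set.range ((↑) : ℚ → ℝ)) := Rat.denseRange_cast
  have heq : (fun x : ℝ => Γ x ω) = fun _ : ℝ => Γ 0 ω := by
    refine Continuous.ext_on hdense hcω continuous_const ?_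
    rintro _ ⟨q, rfl⟩
    exact hq q
  exact congrFun heq x
end

section
/- Let δ > 0 and a, b > 0. Then for every r ≥ max(2a, 1/b) the series Q_C(r) := Σ_{n=0}^∞ 2^n · (a · r^{−1} · 2^{−nδ})^{b·r·2^{nδ}} converges (is finite), and moreover Q_C(r) → 0 as r → ∞. -/
open MeasureTheory Filter Set

/-- Let `δ > 0` and `a, b > 0`. For every `r ≥ max(2a, 1/b)` the series
`Q_C(r) = Σ_{n=0}^∞ 2^n · (a·r^{−1}·2^{−nδ})^{b·r·2^{nδ}}` converges, and `Q_C(r) → 0` as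
`r → ∞`. -/
theorem QC_summable_and_tendsto_zero (δ a b : ℝ) (hδ : 0 < δ) (ha : 0 < a) (hb : 0 < b) :
    (∀ r : ℝ, max (2 * a) (1 / b) ≤ r →
      Summable fun n : ℕ =>
        (2 : ℝ) ^ n *
          (a * r⁻¹ * (2 : ℝ) ^ (-(n : ℝ) * δ)) ^ (b * r * (2 : ℝ) ^ ((n : ℝ) * δ))) ∧
    Tendsto
      (fun r : ℝ => ∑' n : ℕ,
        (2 : ℝ) ^ n *
          (a * r⁻¹ * (2 : ℝ) ^ (-(n : ℝ) * δ)) ^ (b * r * (2 : ℝ) ^ ((n : ℝ) * δ)))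
      atTop (nhds 0) := by
  have hlog2 : (0:ℝ) < Real.log 2 := Real.log_pos (by norm_num)
  set c : ℕ → ℝ := fun n =>
    (2:ℝ) ^ n * (2:ℝ) ^ (-(1 + (n:ℝ) * δ) * ((2:ℝ) ^ ((n:ℝ) * δ) - 1)) with hc
  have hcpos : ∀ n, 0 < c n := fun n =>
    mul_pos (by positivity) (Real.rpow_pos_of_pos two_pos _)
  -- summability of c
  have hcsum : Summable c := by
    apply summable_of_isBigO_nat (summable_geometric_of_lt_one (r := 1/2) (by norm_num) (by norm_num))
    rw [Asymptotics.isBigO_iff]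
    refine ⟨1, ?_⟩
    filter_upwards [(tendsto_natCast_atTop_atTop (R := ℝ)).eventually_ge_atTop
      (2 / (δ ^ 2 * Real.log 2))] with n hn
    have hs : 0 ≤ (n:ℝ) * δ := by positivity
    set s := (n:ℝ) * δ with hsdef
    have h2s : s * Real.log 2 + 1 ≤ (2:ℝ) ^ s := by
      rw [Real.rpow_def_of_pos two_pos]
      calc s * Real.log 2 + 1 = Real.log 2 * s + 1 := by ring
        _ ≤ Real.exp (Real.log 2 * s) := Real.add_one_le_exp _
    have hstwo : 2 ≤ (n:ℝ) * (δ ^ 2 * Real.log 2) := by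
      rw [div_le_iff₀ (by positivity)] at hn
      linarith
    have hkey : 2 * (n:ℝ) ≤ (1 + s) * ((2:ℝ) ^ s - 1) := by
      have h1 : s * Real.log 2 ≤ (2:ℝ) ^ s - 1 := by linarith
      have h2 : 2 * (n:ℝ) ≤ s * (s * Real.log 2) := by
        have h0 : (0:ℝ) ≤ (n:ℝ) := Nat.cast_nonneg n
        rw [hsdef]
        nlinarith [mul_le_mul_of_nonneg_left hstwo h0]
      nlinarith [mul_le_mul_of_nonneg_left h1 hs]
    have hcn : c n = (2:ℝ) ^ ((n:ℝ) + -(1 + s) * ((2:ℝ) ^ s - 1)) := by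
      rw [hc, Real.rpow_add two_pos, Real.rpow_natCast]
    have hhalf : ((1:ℝ)/2) ^ n = (2:ℝ) ^ (-(n:ℝ)) := by
      rw [Real.rpow_neg (by norm_num), Real.rpow_natCast, one_div, inv_pow]
    rw [Real.norm_eq_abs, Real.norm_eq_abs, abs_of_pos (hcpos n),
      abs_of_pos (by positivity), one_mul, hcn, hhalf]
    exact Real.rpow_le_rpow_of_exponent_le one_le_two (by linarith)
  -- per-term bound
  have key : ∀ r : ℝ, 0 < r → a * r⁻¹ ≤ 1/2 → 1 ≤ b * r → ∀ n : ℕ,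
      (2 : ℝ) ^ n *
          (a * r⁻¹ * (2 : ℝ) ^ (-(n : ℝ) * δ)) ^ (b * r * (2 : ℝ) ^ ((n : ℝ) * δ))
        ≤ a * r⁻¹ * c n := by
    intro r hr0 hr1 hr2 n
    have hs : 0 ≤ (n:ℝ) * δ := by positivity
    set s := (n:ℝ) * δ with hsdef
    have hns : -(n:ℝ) * δ = -s := by rw [hsdef]; ring
    set x : ℝ := a * r⁻¹ * (2:ℝ) ^ (-s) with hx
    set e : ℝ := b * r * (2:ℝ) ^ s with he
    have har : 0 < a * r⁻¹ := by positivity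
    have hx0 : 0 < x := by positivity
    have h2s1 : (1:ℝ) ≤ (2:ℝ) ^ s := Real.one_le_rpow one_le_two hs
    have he2 : (2:ℝ) ^ s ≤ e := by
      rw [he]
      nlinarith
    have he1 : 1 ≤ e := le_trans h2s1 he2
    have hxle : x ≤ (2:ℝ) ^ (-(1 + s)) := by
      have : (2:ℝ) ^ (-(1+s)) = (1/2) * (2:ℝ) ^ (-s) := by
        rw [show -(1+s) = -1 + -s by ring, Real.rpow_add two_pos,
          Real.rpow_neg_one]
        norm_num
      rw [this, hx]
      exact mul_le_mul_of_nonneg_right hr1 (Real.rpow_pos_of_pos two_pos _).le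
    have step1 : x ^ (e - 1) ≤ (2:ℝ) ^ (-(1 + s) * (e - 1)) := by
      rw [Real.rpow_mul (by norm_num : (0:ℝ) ≤ 2)]
      exact Real.rpow_le_rpow hx0.le hxle (by linarith)
    have step3 : (2:ℝ) ^ (-(1 + s) * (e - 1)) ≤
        (2:ℝ) ^ (-(1 + s) * ((2:ℝ) ^ s - 1)) := by
      apply Real.rpow_le_rpow_of_exponent_le one_le_two
      nlinarith
    have step4 : x ≤ a * r⁻¹ := by
      rw [hx]
      have : (2:ℝ) ^ (-s) ≤ 1 :=
        Real.rpow_le_one_of_one_le_of_nonpos one_le_two (by linarith)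
      nlinarith
    have hxe : x ^ e = x ^ (e - 1) * x := by
      rw [show e = (e - 1) + 1 by ring, Real.rpow_add hx0, Real.rpow_one]
      ring_nf
    have hmain : x ^ e ≤ (2:ℝ) ^ (-(1 + s) * ((2:ℝ) ^ s - 1)) * (a * r⁻¹) := by
      rw [hxe]
      exact mul_le_mul (le_trans step1 step3) step4 hx0.le
        (Real.rpow_pos_of_pos two_pos _).le
    calc (2:ℝ) ^ n * (a * r⁻¹ * (2:ℝ) ^ (-(n:ℝ) * δ)) ^ (b * r * (2:ℝ) ^ ((n:ℝ) * δ))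
        = (2:ℝ) ^ n * x ^ e := by rw [hns]
      _ ≤ (2:ℝ) ^ n * ((2:ℝ) ^ (-(1 + s) * ((2:ℝ) ^ s - 1)) * (a * r⁻¹)) :=
          mul_le_mul_of_nonneg_left hmain (by positivity)
      _ = a * r⁻¹ * c n := by rw [hc]; ring
  -- hypotheses from r ≥ max
  have hyp : ∀ r : ℝ, max (2 * a) (1 / b) ≤ r → 0 < r ∧ a * r⁻¹ ≤ 1/2 ∧ 1 ≤ b * r := by
    intro r hr
    have h1 : 2 * a ≤ r := le_trans (le_max_left _ _) hr
    have h2 : 1 / b ≤ r := le_trans (le_max_right _ _) hr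
    have hr0 : 0 < r := lt_of_lt_of_le (by positivity) h2
    refine ⟨hr0, ?_, ?_⟩
    · rw [mul_inv_le_iff₀ hr0]; linarith
    · rw [div_le_iff₀ hb] at h2; linarith [mul_comm b r]
  have hsum : ∀ r : ℝ, max (2 * a) (1 / b) ≤ r →
      Summable fun n : ℕ =>
        (2 : ℝ) ^ n *
          (a * r⁻¹ * (2 : ℝ) ^ (-(n : ℝ) * δ)) ^ (b * r * (2 : ℝ) ^ ((n : ℝ) * δ)) := by
    intro r hr
    obtain ⟨hr0, hr1, hr2⟩ := hyp r hr
    refine Summable.of_nonneg_of_le (fun n => ?_) (key r hr0 hr1 hr2) (hcsum.mul_left _)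
    have : 0 < a * r⁻¹ * (2:ℝ) ^ (-(n:ℝ) * δ) := by positivity
    positivity
  refine ⟨hsum, ?_⟩
  have hC : 0 ≤ ∑' n, c n := tsum_nonneg fun n => (hcpos n).le
  apply squeeze_zero' (g := fun r => a * r⁻¹ * ∑' n, c n)
  · filter_upwards [eventually_ge_atTop (max (2 * a) (1 / b))] with r hr
    obtain ⟨hr0, hr1, hr2⟩ := hyp r hr
    apply tsum_nonneg
    intro n
    have : 0 < a * r⁻¹ * (2:ℝ) ^ (-(n:ℝ) * δ) := by positivity
    positivity
  · filter_upwards [eventually_ge_atTop (max (2 * a) (1 / b))] with r hr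
    obtain ⟨hr0, hr1, hr2⟩ := hyp r hr
    calc (∑' n : ℕ, (2 : ℝ) ^ n *
          (a * r⁻¹ * (2 : ℝ) ^ (-(n : ℝ) * δ)) ^ (b * r * (2 : ℝ) ^ ((n : ℝ) * δ)))
        ≤ ∑' n, a * r⁻¹ * c n :=
          Summable.tsum_le_tsum (key r hr0 hr1 hr2) (hsum r hr) (hcsum.mul_left _)
      _ = a * r⁻¹ * ∑' n, c n := tsum_mul_left
  · have : Tendsto (fun r : ℝ => a * r⁻¹ * ∑' n, c n) atTop (nhds (a * 0 * ∑' n, c n)) :=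
      ((tendsto_inv_atTop_zero.const_mul a).mul_const _)
    simpa using this
end
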